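/- Let M be a simple connected matroid of rank d+1 ≥ 3 with two different Cremona bases b and b*. The number of connected components of the support graph G_b(b*) equals |b ∩ b*|. -/

import Mathlib

open Set

variable {α : Type*}

/-- The set of non-basis elements on the line through `x` and `y`. -/
def Fij (M : Matroid α) (x y : α) : Set α := M.closure {x, y} \ {x, y}

/-- `b` is a Cremona basis: a base of `M` such that the sets
`Fij = cl{bᵢ,bⱼ} \ {bᵢ,bⱼ}` are pairwise disjoint with union `M.E \ b`. -/
def IsCremonaBasis (M : Matroid α) (b : Set α) : Prop :=
  M.IsBase b ∧
  (∀ x ∈ b, ∀ y ∈ b, ∀ x' ∈ b, ∀ y' ∈ b, x ≠ y → x' ≠ y' →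
    ({x, y} : Set α) ≠ {x', y'} → Disjoint (Fij M x y) (Fij M x' y')) ∧
  (⋃ x ∈ b, ⋃ y ∈ b, ⋃ _ : x ≠ y, Fij M x y) = M.E \ b

/-- The `b`-support of a set `S`. -/
def suppb (M : Matroid α) (b S : Set α) : Set α :=
  (b ∩ S) ∪ ⋃ x ∈ b, ⋃ y ∈ b, ⋃ _ : x ≠ y, ⋃ _ : (S ∩ Fij M x y).Nonempty, ({x, y} : Set α)

/-- Adjacency in the support graph `G_b(S)`: there is an edge between `x` and `y`
for each element of `S ∩ Fij M x y`. -/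
def Adjb (M : Matroid α) (b S : Set α) (x y : α) : Prop :=
  x ∈ b ∧ y ∈ b ∧ x ≠ y ∧ (S ∩ Fij M x y).Nonempty

/-- The support graph `G_b(S)` is connected. -/
def SuppConnected (M : Matroid α) (b S : Set α) : Prop :=
  ∀ x ∈ suppb M b S, ∀ y ∈ suppb M b S, Relation.ReflTransGen (Adjb M b S) x y

/-- The vertex set of the connected component of `x` in the support graph `G_b(S)`. -/
def compOf (M : Matroid α) (b S : Set α) (x : α) : Set α :=
  {y ∈ suppb M b S | Relation.ReflTransGen (Adjb M b S) x y}

/-- A matroid is simple if every pair of (not necessarily distinct) elements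
of the ground set is independent. -/
def MSimple (M : Matroid α) : Prop := ∀ e ∈ M.E, ∀ f ∈ M.E, M.Indep {e, f}

/-- A circuit: a minimal dependent set. -/
def MCircuit (M : Matroid α) (C : Set α) : Prop :=
  C ⊆ M.E ∧ ¬ M.Indep C ∧ ∀ x ∈ C, M.Indep (C \ {x})

/-- A matroid is connected if its ground set is nonempty and every two distinct
elements lie on a common circuit. -/
def MConnected (M : Matroid α) : Prop :=
  M.E.Nonempty ∧ ∀ e ∈ M.E, ∀ f ∈ M.E, e = f ∨ ∃ C, MCircuit M C ∧ e ∈ C ∧ f ∈ C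

/-- The rank of a set in a matroid: the supremum of cardinalities of independent subsets. -/
noncomputable def mRank (M : Matroid α) (X : Set α) : ℕ :=
  sSup {n | ∃ I, M.Indep I ∧ I ⊆ X ∧ I.ncard = n}

/-!
Every component of `G_b(b*)` contains exactly one point of `b ∩ b*`.

At most one: walking along edges from `s ∈ b ∩ b*` one only reaches points spanned by `s` and
`b* \ b`, which span no other point of `b*`.

At least one: let `V` be the set of vertices of the component of `x` and suppose `V` misses `b*`.
Every point of `b*` lies on a `b`-line inside `V` or inside `b \ V`, so `b*` lies in the union of
the spans of `V` and of `b \ V`; comparing the `b`-line and the `b*`-line through any other point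
shows that the whole ground set does. If `V ≠ b` these two spans are skew, so no circuit meets
both, contradicting connectivity. If `V = b`, then `b` and `b*` are disjoint, the `b*`-line
through each point `y ∈ b` is a `b`-line through `y` carrying two points of `b*` (a digon), these
lines carry all of `b*`, and so the components of `G_b(b*)` are single digons, which is absurd
since `|b| ≥ 3`.
-/

section Simple

variable {M : Matroid α} {I X : Set α} {e f g u w x y : α}

lemma MSimple.eq_of_mem_closure_singleton (hs : MSimple M) (he : e ∈ M.E) (hf : f ∈ M.E)
    (h : e ∈ M.closure {f}) : e = f := by
  by_contra hef
  have := (hs e he f hf).notMem_closure_sdiff_of_mem (mem_insert e {f})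
  rw [pair_sdiff_left hef] at this
  exact this h

lemma Matroid.mem_closure_insert_of_mem_closure_pair (he : e ∈ M.closure {y, f})
    (hf : f ∈ M.closure X) (hy : y ∈ M.E) : e ∈ M.closure (insert y X) :=
  M.closure_subset_closure_of_subset_closure
    (pair_subset (M.mem_closure_of_mem' (mem_insert y X) hy)
      (M.closure_subset_closure (subset_insert y X) hf)) he

lemma MSimple.mem_closure_pair_exchange (hs : MSimple M) (he : e ∈ M.closure {f, x})
    (hex : e ≠ x) (hx : x ∈ M.E) : f ∈ M.closure {e, x} :=
  (M.closure_exchange ⟨he, fun h ↦ hex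
    (hs.eq_of_mem_closure_singleton (M.closure_subset_ground _ he) hx h)⟩).1

lemma Fij_congr (h : ({x, y} : Set α) = {u, w}) : Fij M x y = Fij M u w := by
  rw [Fij, Fij, h]

lemma Fij_comm : Fij M x y = Fij M y x := Fij_congr (pair_comm x y)

lemma MSimple.mem_closure_of_mem_Fij (hs : MSimple M) (hg : g ∈ Fij M x y) (hx : x ∈ M.E) :
    y ∈ M.closure {g, x} :=
  hs.mem_closure_pair_exchange (by rw [pair_comm]; exact hg.1) (fun h ↦ hg.2 (.inl h)) hx

lemma MSimple.mem_closure_of_mem_Fij_of_mem_Fij (hs : MSimple M) (he : e ∈ Fij M u w)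
    (hf : f ∈ Fij M u w) (hef : e ≠ f) (hw : w ∈ M.E) :
    u ∈ M.closure {e, f} := by
  have hu' : u ∈ M.closure {e, w} := hs.mem_closure_of_mem_Fij (Fij_comm ▸ he) hw
  have hwe : M.closure {e, w} ⊆ M.closure {e, f} := by
    refine M.closure_subset_closure_of_subset_closure (pair_subset ?_ ?_)
    · exact M.mem_closure_of_mem' (.inl rfl) (M.closure_subset_ground _ he.1)
    · have hf' : f ∈ M.closure {w, e} := by
        rw [pair_comm]
        exact M.closure_subset_closure_of_subset_closure
          (pair_subset hu' (M.mem_closure_of_mem' (.inr rfl) hw)) hf.1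
      rw [pair_comm]
      exact hs.mem_closure_pair_exchange hf' hef.symm (M.closure_subset_ground _ he.1)
  exact hwe hu'

lemma notMem_of_mem_Fij (hI : M.Indep I) (hx : x ∈ I) (hy : y ∈ I) (he : e ∈ Fij M x y) :
    e ∉ I := fun heI ↦
  he.2 (by rw [← hI.closure_inter_eq_self_of_subset (pair_subset hx hy)]; exact ⟨he.1, heI⟩)

/-- The support in `I` of a point of `Fij M x y` is exactly `{x, y}`. -/
lemma MSimple.mem_of_mem_Fij_of_mem_closure (hs : MSimple M) (hI : M.Indep I) (hx : x ∈ I)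
    (hy : y ∈ I) (hX : X ⊆ I) (he : e ∈ Fij M x y) (heX : e ∈ M.closure X) : x ∈ X := by
  by_contra hxX
  have hinter : e ∈ M.closure ({x, y} ∩ X) := by
    rw [(hI.subset (union_subset (pair_subset hx hy) hX)).closure_inter_eq_inter_closure]
    exact ⟨he.1, heX⟩
  have hsub : {x, y} ∩ X ⊆ {y} := by
    rintro z ⟨rfl | rfl, hz⟩
    · exact absurd hz hxX
    · rfl
  have hey := hs.eq_of_mem_closure_singleton (M.closure_subset_ground _ he.1)
    (hI.subset_ground hy) (M.closure_subset_closure hsub hinter)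
  exact he.2 (.inr hey)

end Simple

section Cremona

variable {M : Matroid α} {b bs : Set α} {g p q u v x y z : α}

lemma IsCremonaBasis.exists_mem_Fij (hb : IsCremonaBasis M b) (hz : z ∈ M.E) (hzb : z ∉ b) :
    ∃ p ∈ b, ∃ q ∈ b, p ≠ q ∧ z ∈ Fij M p q := by
  have h : z ∈ M.E \ b := ⟨hz, hzb⟩
  rw [← hb.2.2] at h
  simpa only [mem_iUnion, exists_prop] using h

lemma IsCremonaBasis.pair_eq_of_mem_Fij (hb : IsCremonaBasis M b) (hp : p ∈ b) (hq : q ∈ b)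
    (hu : u ∈ b) (hv : v ∈ b) (hpq : p ≠ q) (huv : u ≠ v) (hgpq : g ∈ Fij M p q)
    (hguv : g ∈ Fij M u v) : ({p, q} : Set α) = {u, v} := by
  by_contra hne
  exact (hb.2.1 p hp q hq u hu v hv hpq huv hne).ne_of_mem hgpq hguv rfl

lemma Adjb.symm (h : Adjb M b bs x y) : Adjb M b bs y x :=
  ⟨h.2.1, h.1, h.2.2.1.symm, Fij_comm (M := M) ▸ h.2.2.2⟩

instance : Std.Symm (Adjb M b bs) := ⟨fun _ _ ↦ Adjb.symm⟩

lemma compOf_eq_of_reflTransGen (h : Relation.ReflTransGen (Adjb M b bs) x y) :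
    compOf M b bs x = compOf M b bs y := by
  ext z
  exact and_congr_right fun _ ↦ ⟨(Std.Symm.symm _ _ h).trans, h.trans⟩

lemma mem_of_mem_suppb (hx : x ∈ suppb M b bs) : x ∈ b := by
  rcases hx with hx | hx
  · exact hx.1
  · simp only [mem_iUnion] at hx
    obtain ⟨p, hp, q, hq, -, -, rfl | rfl⟩ := hx
    exacts [hp, hq]

lemma MSimple.mem_closure_of_reflTransGen_adjb (hs : MSimple M) (hb : M.Indep b)
    (hbs : bs ⊆ M.E) (hx : x ∈ M.E) (h : Relation.ReflTransGen (Adjb M b bs) x y) :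
    y ∈ M.closure (insert x (bs \ b)) := by
  induction h with
  | refl => exact M.mem_closure_of_mem' (mem_insert x _) hx
  | tail _ hadj ih =>
    obtain ⟨hpb, hqb, -, g, hgbs, hg⟩ := hadj
    refine M.closure_subset_closure_of_subset_closure (pair_subset ?_ ih)
      (hs.mem_closure_of_mem_Fij hg (hb.subset_ground hpb))
    exact M.mem_closure_of_mem' (.inr ⟨hgbs, notMem_of_mem_Fij hb hpb hqb hg⟩) (hbs hgbs)

lemma MSimple.eq_of_reflTransGen_adjb (hs : MSimple M) (hb : M.Indep b) (hbs : M.Indep bs)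
    (hx : x ∈ b ∩ bs) (hy : y ∈ b ∩ bs) (h : Relation.ReflTransGen (Adjb M b bs) x y) :
    x = y := by
  by_contra hxy
  refine hbs.notMem_closure_sdiff_of_mem hy.2 (M.closure_subset_closure ?_
    (hs.mem_closure_of_reflTransGen_adjb hb hbs.subset_ground (hb.subset_ground hx.1) h))
  rintro z (rfl | ⟨hz, hzb⟩)
  · exact ⟨hx.2, hxy⟩
  · exact ⟨hz, fun hzy ↦ hzb (hzy ▸ hy.1)⟩

end Cremona

section Skew

variable {M : Matroid α} {A I J K V W X : Set α}

lemma Matroid.eRk_union_closure_add_encard_le (hA : M.Indep A) (hK : M.Indep K) (hKX : K ⊆ X)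
    (hKA : K ⊆ M.closure A) : M.eRk (X ∪ M.closure A) + K.encard ≤ M.eRk X + A.encard := by
  rw [← hA.eRk_eq_encard, ← M.eRk_closure_eq A, add_comm]
  exact (add_le_add_left (hK.encard_le_eRk_of_subset (subset_inter hKX hKA)) _).trans
    (M.eRk_inter_add_eRk_union_le X (M.closure A))

lemma Matroid.Indep.union_indep_of_subset_closure [M.RankFinite] (hVW : M.Indep (V ∪ W))
    (hdj : Disjoint V W) (hI : M.Indep I) (hIV : I ⊆ M.closure V) (hJ : M.Indep J)
    (hJW : J ⊆ M.closure W) : M.Indep (I ∪ J) := by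
  have hV := hVW.subset subset_union_left
  have hW := hVW.subset subset_union_right
  have hIW : W.encard + I.encard ≤ M.eRk (I ∪ M.closure W) := by
    have h := M.eRk_union_closure_add_encard_le hV hI (subset_union_left (t := M.closure W)) hIV
    have hVW' : V.encard + W.encard ≤ M.eRk (I ∪ M.closure W ∪ M.closure V) := by
      rw [← encard_union_eq hdj, ← hVW.eRk_eq_encard]
      refine M.eRk_mono (union_subset ?_ ?_)
      · exact (M.subset_closure V hV.subset_ground).trans subset_union_right
      · exact (M.subset_closure W hW.subset_ground).trans
          (subset_union_right.trans subset_union_left)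
    rw [← ENat.add_le_add_iff_right hV.finite.encard_lt_top.ne, add_comm _ V.encard,
      ← add_assoc]
    exact (add_le_add_left hVW' _).trans h
  have hIJ : W.encard + (I.encard + J.encard) ≤ M.eRk (I ∪ J) + W.encard := by
    have h := M.eRk_union_closure_add_encard_le hW hJ (subset_union_right (s := I)) hJW
    have hmono : M.eRk (I ∪ M.closure W) ≤ M.eRk (I ∪ J ∪ M.closure W) :=
      M.eRk_mono (union_subset_union_left _ subset_union_left)
    rw [← add_assoc]
    exact (add_le_add_left (hIW.trans hmono) _).trans h
  rw [add_comm, ENat.add_le_add_iff_right hW.finite.encard_lt_top.ne] at hIJ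
  exact (M.isRkFinite_set _).indep_of_encard_le_eRk ((encard_union_le I J).trans hIJ)

end Skew

section Separation

variable {M : Matroid α} {b bs V W : Set α} {e f p q x y z : α}

lemma IsCremonaBasis.subset_closure_union_of_adjb_closed (hb : IsCremonaBasis M b)
    (hbs : bs ⊆ M.E) (hV : ∀ p q, Adjb M b bs p q → p ∈ V → q ∈ V) :
    bs ⊆ M.closure V ∪ M.closure (b \ V) := by
  intro g hg
  have hgE := hbs hg
  by_cases hgb : g ∈ b
  · by_cases hgV : g ∈ V
    · exact .inl (M.mem_closure_of_mem' hgV hgE)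
    · exact .inr (M.mem_closure_of_mem' ⟨hgb, hgV⟩ hgE)
  obtain ⟨p, hp, q, hq, hpq, hgpq⟩ := hb.exists_mem_Fij hgE hgb
  have hadj : Adjb M b bs p q := ⟨hp, hq, hpq, g, hg, hgpq⟩
  by_cases hpV : p ∈ V
  · exact .inl (M.closure_subset_closure (pair_subset hpV (hV p q hadj hpV)) hgpq.1)
  have hqV : q ∉ V := fun hqV ↦ hpV (hV q p hadj.symm hqV)
  exact .inr (M.closure_subset_closure
    (pair_subset (mem_sdiff_of_mem hp hpV) (mem_sdiff_of_mem hq hqV)) hgpq.1)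

/-- Through a point `z` outside the skew flats `cl V` and `cl W` there is at most one line
meeting both of them. -/
lemma MSimple.eq_of_mem_Fij_of_mem_closure_pair (hs : MSimple M) (hVW : M.Indep (V ∪ W))
    (hdj : Disjoint V W) (hp : p ∈ V) (hq : q ∈ W) (hz : z ∈ Fij M p q)
    (he : e ∈ M.closure V) (hf : f ∈ M.closure W) (hzef : z ∈ M.closure {e, f}) : e = p := by
  have hWE : W ⊆ M.E := subset_union_right.trans hVW.subset_ground
  have hpE : p ∈ M.E := hVW.subset_ground (.inl hp)
  have hzW : z ∉ M.closure W := by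
    intro hzW
    have hpW : p ∈ M.closure W := M.closure_subset_closure_of_subset_closure
      (pair_subset hzW (M.mem_closure_of_mem' hq (hWE hq)))
      (hs.mem_closure_of_mem_Fij (Fij_comm ▸ hz) (hWE hq))
    have : p ∈ M.closure W ∩ (V ∪ W) := ⟨hpW, .inl hp⟩
    rw [hVW.closure_inter_eq_self_of_subset subset_union_right] at this
    exact hdj.ne_of_mem hp this rfl
  have hze : z ∈ M.closure (insert e W) :=
    M.mem_closure_insert_of_mem_closure_pair hzef hf (M.closure_subset_ground _ he)
  have hep : e ∈ M.closure (insert p W) := by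
    refine M.closure_subset_closure_of_subset_closure (insert_subset ?_ ?_)
      (M.closure_exchange ⟨hze, hzW⟩).1
    · exact M.closure_subset_closure (insert_subset_insert (singleton_subset_iff.2 hq)) hz.1
    · exact M.subset_closure_of_subset' (subset_insert p W) hWE
  have hinter : e ∈ M.closure (V ∩ insert p W) := by
    rw [(hVW.subset (union_subset subset_union_left
      (insert_subset (.inl hp) subset_union_right))).closure_inter_eq_inter_closure]
    exact ⟨he, hep⟩
  refine hs.eq_of_mem_closure_singleton (M.closure_subset_ground _ he) hpE
    (M.closure_subset_closure ?_ hinter)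
  rintro w ⟨hwV, rfl | hwW⟩
  · rfl
  · exact absurd hwW (hdj.notMem_of_mem_left hwV)

lemma MSimple.ground_subset_closure_union (hs : MSimple M) (hb : IsCremonaBasis M b)
    (hbs : IsCremonaBasis M bs) (hV : V ⊆ b) (hVbs : Disjoint V bs)
    (hcov : bs ⊆ M.closure V ∪ M.closure (b \ V)) :
    M.E ⊆ M.closure V ∪ M.closure (b \ V) := by
  intro z hz
  by_cases hzb : z ∈ b
  · by_cases hzV : z ∈ V
    · exact .inl (M.mem_closure_of_mem' hzV hz)
    · exact .inr (M.mem_closure_of_mem' ⟨hzb, hzV⟩ hz)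
  by_cases hzbs : z ∈ bs
  · exact hcov hzbs
  by_contra hzVW
  obtain ⟨hzV, hzW⟩ := not_or.1 hzVW
  have hindep : M.Indep (V ∪ (b \ V)) := by rw [union_sdiff_cancel hV]; exact hb.1.indep
  obtain ⟨e, he, f, hf, -, hzef⟩ := hbs.exists_mem_Fij hz hzbs
  have hef : (e ∈ M.closure V ∧ f ∈ M.closure (b \ V)) ∨
      (f ∈ M.closure V ∧ e ∈ M.closure (b \ V)) := by
    rcases hcov he with heV | heW <;> rcases hcov hf with hfV | hfW
    · exact absurd (M.closure_subset_closure_of_subset_closure (pair_subset heV hfV) hzef.1) hzV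
    · exact .inl ⟨heV, hfW⟩
    · exact .inr ⟨hfV, heW⟩
    · exact absurd (M.closure_subset_closure_of_subset_closure (pair_subset heW hfW) hzef.1) hzW
  have hcross : ∀ {p q}, p ∈ V → q ∈ b \ V → z ∈ Fij M p q → False := by
    intro p q hp hq hzpq
    rcases hef with ⟨heV, hfW⟩ | ⟨hfV, heW⟩
    · exact hVbs.ne_of_mem hp he (hs.eq_of_mem_Fij_of_mem_closure_pair hindep
        disjoint_sdiff_right hp hq hzpq heV hfW hzef.1).symm
    · exact hVbs.ne_of_mem hp hf (hs.eq_of_mem_Fij_of_mem_closure_pair hindep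
        disjoint_sdiff_right hp hq hzpq hfV heW (pair_comm e f ▸ hzef.1)).symm
  obtain ⟨p, hp, q, hq, -, hzpq⟩ := hb.exists_mem_Fij hz hzb
  by_cases hpV : p ∈ V <;> by_cases hqV : q ∈ V
  · exact hzV (M.closure_subset_closure (pair_subset hpV hqV) hzpq.1)
  · exact hcross hpV ⟨hq, hqV⟩ hzpq
  · exact hcross hqV ⟨hp, hpV⟩ (Fij_comm ▸ hzpq)
  · exact hzW (M.closure_subset_closure
      (pair_subset (mem_sdiff_of_mem hp hpV) (mem_sdiff_of_mem hq hqV)) hzpq.1)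

lemma not_mConnected_of_ground_subset_closure_union [M.RankFinite] (hb : M.Indep b)
    (hV : V ⊆ b) (hx : x ∈ V) (hy : y ∈ b \ V)
    (hE : M.E ⊆ M.closure V ∪ M.closure (b \ V)) :
    ¬ MConnected M := by
  intro hconn
  obtain hxy | ⟨C, ⟨hCE, hCdep, hCmin⟩, hxC, hyC⟩ :=
    hconn.2 x (hb.subset_ground (hV hx)) y (hb.subset_ground hy.1)
  · exact hy.2 (hxy ▸ hx)
  have hindep : M.Indep (V ∪ (b \ V)) := by rwa [union_sdiff_cancel hV]
  have hyV : y ∉ M.closure V := fun h ↦ hy.2 (by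
    rw [← hb.closure_inter_eq_self_of_subset hV]; exact ⟨h, hy.1⟩)
  refine hCdep ?_
  rw [← inter_union_sdiff C (M.closure V)]
  refine hindep.union_indep_of_subset_closure disjoint_sdiff_right
    ((hCmin y hyC).subset ?_) inter_subset_right ((hCmin x hxC).subset ?_)
    fun w hw ↦ (hE (hCE hw.1)).resolve_left hw.2
  · rintro w ⟨hwC, hwV⟩
    exact ⟨hwC, fun hwy ↦ hyV (hwy ▸ hwV)⟩
  · rintro w ⟨hwC, hwV⟩
    exact ⟨hwC, fun hwx ↦ hwV (hwx ▸ M.mem_closure_of_mem' hx (hb.subset_ground (hV hx)))⟩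

end Separation

section Digon

variable {M : Matroid α} {b bs : Set α} {g u w w' x y : α}

/-- `u` and `w` are joined by at least two parallel edges of `G_b(b*)`. -/
def IsDigon (M : Matroid α) (b bs : Set α) (u w : α) : Prop :=
  u ∈ b ∧ w ∈ b ∧ u ≠ w ∧ (bs ∩ Fij M u w).Nontrivial

lemma IsDigon.symm (h : IsDigon M b bs u w) : IsDigon M b bs w u :=
  ⟨h.2.1, h.1, h.2.2.1.symm, Fij_comm (M := M) ▸ h.2.2.2⟩

/-- If `b` and `b*` are disjoint, the `b*`-line through `y ∈ b` is a `b`-line through `y`. -/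
lemma MSimple.exists_isDigon (hs : MSimple M) (hb : IsCremonaBasis M b)
    (hbs : IsCremonaBasis M bs) (hdisj : Disjoint b bs) (hy : y ∈ b) :
    ∃ w, IsDigon M b bs y w := by
  have hbI := hb.1.indep
  have hbE := hb.1.subset_ground
  have hbsE := hbs.1.subset_ground
  obtain ⟨e, he, f, hf, hef, hyef⟩ := hbs.exists_mem_Fij (hbE hy) (hdisj.notMem_of_mem_left hy)
  obtain ⟨a, ha, a', ha', haa', hea⟩ :=
    hb.exists_mem_Fij (hbsE he) (hdisj.notMem_of_mem_right he)
  obtain ⟨c, hc, c', hc', hcc', hfc⟩ :=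
    hb.exists_mem_Fij (hbsE hf) (hdisj.notMem_of_mem_right hf)
  have hya : {y, a, a'} ⊆ b := insert_subset hy (pair_subset ha ha')
  have hyc : {y, c, c'} ⊆ b := insert_subset hy (pair_subset hc hc')
  have he' : e ∈ M.closure {y, c, c'} := M.mem_closure_insert_of_mem_closure_pair
    (hs.mem_closure_of_mem_Fij (Fij_comm ▸ hyef) (hbsE hf)) hfc.1 (hbE hy)
  have hf' : f ∈ M.closure {y, a, a'} := M.mem_closure_insert_of_mem_closure_pair
    (hs.mem_closure_of_mem_Fij hyef (hbsE he)) hea.1 (hbE hy)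
  have hline : ({a, a'} : Set α) = {c, c'} := by
    have h1 := hs.mem_of_mem_Fij_of_mem_closure hbI ha ha' hyc hea he'
    have h2 := hs.mem_of_mem_Fij_of_mem_closure hbI ha' ha hyc (Fij_comm ▸ hea) he'
    have h3 := hs.mem_of_mem_Fij_of_mem_closure hbI hc hc' hya hfc hf'
    have h4 := hs.mem_of_mem_Fij_of_mem_closure hbI hc' hc hya (Fij_comm ▸ hfc) hf'
    simp only [mem_insert_iff, mem_singleton_iff] at h1 h2 h3 h4
    rw [pair_eq_pair_iff]
    grind
  rw [← Fij_congr hline] at hfc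
  have hyaa : y ∈ ({a, a'} : Set α) := by
    rw [← hbI.closure_inter_eq_self_of_subset (pair_subset ha ha')]
    exact ⟨M.closure_subset_closure_of_subset_closure (pair_subset hea.1 hfc.1) hyef.1, hy⟩
  rcases hyaa with rfl | rfl
  · exact ⟨a', hy, ha', haa', e, ⟨he, hea⟩, f, ⟨hf, hfc⟩, hef⟩
  · rw [Fij_comm] at hea hfc
    exact ⟨a, hy, ha, haa'.symm, e, ⟨he, hea⟩, f, ⟨hf, hfc⟩, hef⟩

lemma MSimple.eq_of_isDigon_of_isDigon (hs : MSimple M) (hb : IsCremonaBasis M b)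
    (hbs : IsCremonaBasis M bs) (h : IsDigon M b bs u w) (h' : IsDigon M b bs u w') : w = w' := by
  obtain ⟨hu, hw, huw, e, ⟨he, heF⟩, f, ⟨hf, hfF⟩, hef⟩ := h
  obtain ⟨-, hw', huw', e', ⟨he', heF'⟩, f', ⟨hf', hfF'⟩, hef'⟩ := h'
  have hbE := hb.1.subset_ground
  have hu_ef : u ∈ Fij M e f :=
    ⟨hs.mem_closure_of_mem_Fij_of_mem_Fij heF hfF hef (hbE hw),
      by rintro (rfl | rfl); exacts [heF.2 (.inl rfl), hfF.2 (.inl rfl)]⟩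
  have hu_ef' : u ∈ Fij M e' f' :=
    ⟨hs.mem_closure_of_mem_Fij_of_mem_Fij heF' hfF' hef' (hbE hw'),
      by rintro (rfl | rfl); exacts [heF'.2 (.inl rfl), hfF'.2 (.inl rfl)]⟩
  have hee : e ∈ ({e', f'} : Set α) :=
    hbs.pair_eq_of_mem_Fij he hf he' hf' hef hef' hu_ef hu_ef' ▸ mem_insert e {f}
  have heF'' : e ∈ Fij M u w' := by rcases hee with rfl | rfl; exacts [heF', hfF']
  have := hb.pair_eq_of_mem_Fij hu hw hu hw' huw huw' heF heF''
  rw [pair_eq_pair_iff] at this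
  rcases this with ⟨-, h⟩ | ⟨h, -⟩
  exacts [h, absurd h huw']

/-- The points of `b*` on digon lines already span `b`, hence they are all of `b*`. -/
lemma MSimple.exists_isDigon_mem_Fij (hs : MSimple M) (hb : M.IsBase b) (hbs : M.Indep bs)
    (hdig : ∀ y ∈ b, ∃ w, IsDigon M b bs y w) (hg : g ∈ bs) :
    ∃ u w, IsDigon M b bs u w ∧ g ∈ Fij M u w := by
  by_contra! hgT
  set T := {g' ∈ bs | ∃ u w, IsDigon M b bs u w ∧ g' ∈ Fij M u w}
  have hbT : b ⊆ M.closure T := by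
    intro y hy
    obtain ⟨w, hyw⟩ := hdig y hy
    obtain ⟨e, ⟨he, heF⟩, f, ⟨hf, hfF⟩, hef⟩ := hyw.2.2.2
    have heT : e ∈ T := ⟨he, y, w, hyw, heF⟩
    have hfT : f ∈ T := ⟨hf, y, w, hyw, hfF⟩
    exact M.closure_subset_closure (pair_subset heT hfT)
      (hs.mem_closure_of_mem_Fij_of_mem_Fij heF hfF hef (hb.subset_ground hyw.2.1))
  have hTg : T ⊆ bs \ {g} := by
    rintro g' ⟨hg', u, w, huw, hg'F⟩
    exact ⟨hg', by rintro rfl; exact hgT u w huw hg'F⟩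
  refine hbs.notMem_closure_sdiff_of_mem hg (M.closure_subset_closure hTg ?_)
  rw [← M.closure_closure T]
  exact M.closure_subset_closure hbT (hb.closure_eq ▸ hbs.subset_ground hg)

lemma Adjb.isDigon (hb : IsCremonaBasis M b)
    (hcover : ∀ g ∈ bs, ∃ u w, IsDigon M b bs u w ∧ g ∈ Fij M u w) (h : Adjb M b bs u w) :
    IsDigon M b bs u w := by
  obtain ⟨hu, hw, huw, g, hg, hgF⟩ := h
  obtain ⟨u', w', h', hgF'⟩ := hcover g hg
  refine ⟨hu, hw, huw, ?_⟩
  rw [Fij_congr (hb.pair_eq_of_mem_Fij hu hw h'.1 h'.2.1 huw h'.2.2.1 hgF hgF')]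
  exact h'.2.2.2

/-- When `b` and `b*` are disjoint, the components of `G_b(b*)` are the digons. -/
lemma MSimple.not_forall_reflTransGen_of_disjoint (hs : MSimple M) (hb : IsCremonaBasis M b)
    (hbs : IsCremonaBasis M bs) (hdisj : Disjoint b bs) (hb3 : 2 < b.ncard) (hx : x ∈ b) :
    ¬ ∀ y ∈ b, Relation.ReflTransGen (Adjb M b bs) x y := by
  intro hall
  have hdig : ∀ y ∈ b, ∃ w, IsDigon M b bs y w := fun y hy ↦
    hs.exists_isDigon hb hbs hdisj hy
  have hadj : ∀ {u w}, Adjb M b bs u w → IsDigon M b bs u w := fun h ↦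
    h.isDigon hb fun g hg ↦ hs.exists_isDigon_mem_Fij hb.1 hbs.1.indep hdig hg
  obtain ⟨w₀, hxw₀⟩ := hdig x hx
  have hcomp : ∀ y, Relation.ReflTransGen (Adjb M b bs) x y → y ∈ ({x, w₀} : Set α) := by
    intro y hy
    induction hy with
    | refl => exact .inl rfl
    | tail _ hzy ih =>
      rcases ih with rfl | rfl
      · exact .inr (hs.eq_of_isDigon_of_isDigon hb hbs (hadj hzy) hxw₀)
      · exact .inl (hs.eq_of_isDigon_of_isDigon hb hbs (hadj hzy) hxw₀.symm)
  obtain ⟨y, hy, hyx⟩ := exists_mem_notMem_of_ncard_lt_ncard (s := {x, w₀}) (t := b)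
    ((ncard_insert_le x {w₀}).trans_lt (by rwa [ncard_singleton]))
  exact hyx (hcomp y (hall y hy))

end Digon

section Components

variable {M : Matroid α} {b bs : Set α} {x : α}

lemma mRank_ground_eq_ncard [M.RankFinite] (hb : M.IsBase b) : mRank M M.E = b.ncard := by
  refine IsGreatest.csSup_eq ⟨⟨b, hb.indep, hb.subset_ground, rfl⟩, ?_⟩
  rintro n ⟨I, hI, -, rfl⟩
  obtain ⟨B, hB, hIB⟩ := hI.exists_isBase_superset
  rw [hb.ncard_eq_ncard_of_isBase hB]
  exact ncard_le_ncard hIB hB.finite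

lemma MSimple.exists_mem_inter_reflTransGen [M.RankFinite] (hs : MSimple M)
    (hconn : MConnected M) (hb : IsCremonaBasis M b) (hbs : IsCremonaBasis M bs)
    (hb3 : 2 < b.ncard) (hx : x ∈ b) :
    ∃ y ∈ b ∩ bs, Relation.ReflTransGen (Adjb M b bs) x y := by
  by_contra! hnone
  set V := {y ∈ b | Relation.ReflTransGen (Adjb M b bs) x y}
  have hV : V ⊆ b := sep_subset _ _
  have hVbs : Disjoint V bs := disjoint_left.2 fun y hy hybs ↦ hnone y ⟨hy.1, hybs⟩ hy.2
  have hclosed : ∀ p q, Adjb M b bs p q → p ∈ V → q ∈ V := fun _ _ hpq hp ↦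
    ⟨hpq.2.1, hp.2.tail hpq⟩
  by_cases hbV : b ⊆ V
  · exact hs.not_forall_reflTransGen_of_disjoint hb hbs (hVbs.mono_left hbV) hb3 hx
      fun y hy ↦ (hbV hy).2
  obtain ⟨y, hyb, hyV⟩ := not_subset.1 hbV
  exact not_mConnected_of_ground_subset_closure_union hb.1.indep hV ⟨hx, .refl⟩ ⟨hyb, hyV⟩
    (hs.ground_subset_closure_union hb hbs hV hVbs
      (hb.subset_closure_union_of_adjb_closed hbs.1.subset_ground hclosed)) hconn

lemma MSimple.setOf_compOf_eq_image [M.RankFinite] (hs : MSimple M) (hconn : MConnected M)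
    (hb : IsCremonaBasis M b) (hbs : IsCremonaBasis M bs) (hb3 : 2 < b.ncard) :
    {V : Set α | ∃ x ∈ suppb M b bs, V = compOf M b bs x} = compOf M b bs '' (b ∩ bs) := by
  ext V
  constructor
  · rintro ⟨x, hx, rfl⟩
    obtain ⟨y, hy, hxy⟩ :=
      hs.exists_mem_inter_reflTransGen hconn hb hbs hb3 (mem_of_mem_suppb hx)
    exact ⟨y, hy, (compOf_eq_of_reflTransGen hxy).symm⟩
  · rintro ⟨y, hy, rfl⟩
    exact ⟨y, .inl hy, rfl⟩

lemma MSimple.injOn_compOf (hs : MSimple M) (hb : M.Indep b) (hbs : M.Indep bs) :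
    InjOn (compOf M b bs) (b ∩ bs) := by
  intro x hx y hy hxy
  have hyx : y ∈ compOf M b bs x := hxy ▸ ⟨.inl hy, .refl⟩
  exact hs.eq_of_reflTransGen_adjb hb hbs hx hy hyx.2

end Components

theorem stmt9_general (M : Matroid α) (hfin : M.E.Finite) (hsimple : MSimple M)
    (hconn : MConnected M) (d : ℕ) (hd : 2 ≤ d) (hrk : mRank M M.E = d + 1)
    (b bs : Set α) (hb : IsCremonaBasis M b) (hbs : IsCremonaBasis M bs) :
    {V : Set α | ∃ x ∈ suppb M b bs, V = compOf M b bs x}.ncard = (b ∩ bs).ncard := by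
  have : M.Finite := ⟨hfin⟩
  have hb3 : 2 < b.ncard := by rw [← mRank_ground_eq_ncard hb.1]; omega
  rw [hsimple.setOf_compOf_eq_image hconn hb hbs hb3,
    (hsimple.injOn_compOf hb.1.indep hbs.1.indep).ncard_image]

/-- The number of connected components of `G_b(b*)` equals `|b ∩ b*|`. -/
theorem stmt9 (M : Matroid α) (hfin : M.E.Finite) (hsimple : MSimple M)
    (hconn : MConnected M) (d : ℕ) (hd : 2 ≤ d) (hrk : mRank M M.E = d + 1)
    (b bs : Set α) (hb : IsCremonaBasis M b) (hbs : IsCremonaBasis M bs) (hne : b ≠ bs) :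
    {V : Set α | ∃ x ∈ suppb M b bs, V = compOf M b bs x}.ncard = (b ∩ bs).ncard :=
  stmt9_general M hfin hsimple hconn d hd hrk b bs hb hbs
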